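/- Let A, B be maximal monotone operators on a real Hilbert space H, z ∈ H, β ∈ (0,1), r > 0, and T := (2J_{r(B_z)^{(β)}} − I) ∘ (2J_{r(A_z)^{(β)}} − I). Then the following are equivalent: (i) there exists x ∈ H such that the orbit {T^k(x)}_{k∈ℕ} is bounded; (ii) the set S = {u ∈ H : z ∈ (I + A + B)(u)} is nonempty. -/

import Mathlib

/-!
Reflected resolvents `2J - I` of monotone operators are nonexpansive, so `T` is nonexpansive.
Writing `c = p + r m` with `p = J_A c`, the point `c` is fixed by `T` exactly when `m ∈ A' p` and
`-m ∈ B' p` for the perturbed operators `A' = (A_z)^{(β)}`, `B' = (B_z)^{(β)}`; unwinding the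
perturbation, `0 ∈ A' p + B' p` says that `u = β⁻¹ p + z` satisfies `z ∈ u + A u + B u`.

It remains to see that a nonexpansive map with a bounded orbit `(T^k x)` has a fixed point
(Browder–Petryshyn). The function `φ y = limsup ‖T^k x - y‖²` is continuous and, by Apollonius'
identity, `φ (midpoint y y') + ‖y - y'‖² / 4 ≤ (φ y + φ y') / 2`; so minimizing sequences are
Cauchy and `φ` attains its minimum at some `c`. Since `φ (T c) ≤ φ c`, the midpoint inequality
for `c` and `T c` forces `T c = c`.
-/

open scoped RealInnerProductSpace

variable {H : Type*} [NormedAddCommGroup H] [InnerProductSpace ℝ H] [CompleteSpace H]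

/-- A set-valued operator is monotone. -/
def MonotoneOp (A : H → Set H) : Prop :=
  ∀ ⦃x y x' y' : H⦄, x' ∈ A x → y' ∈ A y → 0 ≤ ⟪x - y, x' - y'⟫

/-- A set-valued operator is σ-strongly monotone. -/
def StronglyMonotoneOp (σ : ℝ) (A : H → Set H) : Prop :=
  ∀ ⦃x y x' y' : H⦄, x' ∈ A x → y' ∈ A y → σ * ‖x - y‖ ^ 2 ≤ ⟪x - y, x' - y'⟫

/-- A set-valued operator is maximal monotone. -/
def MaximalMonotoneOp (A : H → Set H) : Prop :=
  MonotoneOp A ∧ ∀ x x' : H, (∀ y y' : H, y' ∈ A y → 0 ≤ ⟪x - y, x' - y'⟫) → x' ∈ A x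

/-- The operator `(A_z)^{(β)} : x ↦ 2(1-β)·A((1/β)x + z) + ((1-β)/β)x`. -/
def pert (A : H → Set H) (z : H) (β : ℝ) : H → Set H :=
  fun x => (fun u => (2 * (1 - β)) • u + ((1 - β) / β) • x) '' A (β⁻¹ • x + z)

open Bornology Filter Function Metric Set Topology

theorem limsup_le_limsup_add_of_le {u v : ℕ → ℝ} {c : ℝ} (hu : BddBelow (range u))
    (hv : BddAbove (range v)) (h : ∀ k, u k ≤ v k + c) :
    limsup u atTop ≤ limsup v atTop + c := by
  have hv' : BddBelow (range v) := by
    obtain ⟨b, hb⟩ := hu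
    exact ⟨b - c, forall_mem_range.2 fun k => by linarith [hb (mem_range_self k), h k]⟩
  rw [← limsup_add_const atTop v c hv.isBoundedUnder_of_range
    hv'.isBoundedUnder_of_range.isCoboundedUnder_le]
  exact limsup_le_limsup (Eventually.of_forall h) hu.isBoundedUnder_of_range.isCoboundedUnder_le
    (isBoundedUnder_le_add hv.isBoundedUnder_of_range (isBoundedUnder_const (a := c)))

section LimsupDistSq

variable {P : Type*} [PseudoMetricSpace P]

noncomputable def limsupDistSq (a : ℕ → P) (y : P) : ℝ :=
  limsup (fun k => dist (a k) y ^ 2) atTop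

variable {a : ℕ → P}

theorem bddBelow_range_dist_sq (y : P) : BddBelow (range fun k => dist (a k) y ^ 2) :=
  ⟨0, forall_mem_range.2 fun _ => sq_nonneg _⟩

theorem bddAbove_range_dist_sq (ha : IsBounded (range a)) (y : P) :
    BddAbove (range fun k => dist (a k) y ^ 2) := by
  obtain ⟨R, hR⟩ := ha.subset_closedBall y
  exact ⟨R ^ 2, forall_mem_range.2 fun k => pow_le_pow_left₀ dist_nonneg (hR (mem_range_self k)) 2⟩

theorem limsupDistSq_nonneg (ha : IsBounded (range a)) (y : P) : 0 ≤ limsupDistSq a y :=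
  le_limsup_of_frequently_le (Frequently.of_forall fun _ => sq_nonneg _)
    (bddAbove_range_dist_sq ha y).isBoundedUnder_of_range

theorem limsupDistSq_le_add (ha : IsBounded (range a)) {y y' : P} {c : ℝ}
    (h : ∀ k, dist (a k) y ^ 2 ≤ dist (a k) y' ^ 2 + c) :
    limsupDistSq a y ≤ limsupDistSq a y' + c :=
  limsup_le_limsup_add_of_le (bddBelow_range_dist_sq y) (bddAbove_range_dist_sq ha y') h

theorem continuous_limsupDistSq (ha : IsBounded (range a)) : Continuous (limsupDistSq a) := by
  refine continuous_iff_continuousAt.2 fun p => ?_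
  obtain ⟨R, hR⟩ := ha.subset_closedBall p
  have hR' : ∀ k, ∀ y ∈ closedBall p 1, dist (a k) y ≤ R + 1 := fun k y hy =>
    (dist_triangle_right _ _ p).trans (add_le_add (hR (mem_range_self k)) hy)
  have hR0 : 0 ≤ R + 1 := dist_nonneg.trans (hR' 0 p (mem_closedBall_self zero_le_one))
  have hle : ∀ y ∈ closedBall p 1, ∀ y' ∈ closedBall p 1,
      limsupDistSq a y - limsupDistSq a y' ≤ 2 * (R + 1) * dist y y' := by
    intro y hy y' hy'
    refine sub_le_iff_le_add'.2 (limsupDistSq_le_add ha fun k => ?_)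
    have hdiff : dist (a k) y - dist (a k) y' ≤ dist y y' := by
      linarith [dist_triangle (a k) y' y, dist_comm y y']
    have hsum : dist (a k) y + dist (a k) y' ≤ 2 * (R + 1) := by
      linarith [hR' k y hy, hR' k y' hy']
    nlinarith [mul_le_mul hdiff hsum (by positivity) dist_nonneg]
  have hlip : LipschitzOnWith (2 * (R + 1)).toNNReal (limsupDistSq a) (closedBall p 1) :=
    LipschitzOnWith.of_dist_le_mul fun y hy y' hy' => by
      rw [Real.dist_eq, abs_sub_le_iff, Real.coe_toNNReal _ (by positivity)]
      exact ⟨hle y hy y' hy', dist_comm y y' ▸ hle y' hy' y hy⟩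
  exact hlip.continuousOn.continuousAt (closedBall_mem_nhds p one_pos)

theorem limsupDistSq_orbit_apply_le {T : P → P} (hT : LipschitzWith 1 T) {x : P}
    (hx : IsBounded (range fun k => T^[k] x)) (y : P) :
    limsupDistSq (fun k => T^[k] x) (T y) ≤ limsupDistSq (fun k => T^[k] x) y := by
  calc limsupDistSq (fun k => T^[k] x) (T y)
      = limsup (fun k => dist (T^[k + 1] x) (T y) ^ 2) atTop := (limsup_nat_add _ 1).symm
    _ ≤ limsupDistSq (fun k => T^[k] x) y + 0 := by
      refine limsup_le_limsup_add_of_le (bddBelow_range_dist_sq (T y))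
        (bddAbove_range_dist_sq hx y) fun k => ?_
      rw [iterate_succ_apply', add_zero]
      gcongr
      simpa using hT.dist_le_mul (T^[k] x) y
    _ = limsupDistSq (fun k => T^[k] x) y := add_zero _

end LimsupDistSq

theorem limsupDistSq_midpoint_add_le {E : Type*} [NormedAddCommGroup E] [InnerProductSpace ℝ E]
    {a : ℕ → E} (ha : IsBounded (range a)) (y z : E) :
    limsupDistSq a (midpoint ℝ y z) + (dist y z / 2) ^ 2 ≤
      (limsupDistSq a y + limsupDistSq a z) / 2 := by
  set f : ℝ → ℝ := fun s => s / 2 - (dist y z / 2) ^ 2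
  have hf : Monotone f := fun s t h => by simp only [f]; linarith
  have hapollonius : (fun k => dist (a k) (midpoint ℝ y z) ^ 2) =
      f ∘ ((fun k => dist (a k) y ^ 2) + fun k => dist (a k) z ^ 2) := by
    funext k
    have h := EuclideanGeometry.dist_sq_add_dist_sq_eq_two_mul_dist_midpoint_sq_add_half_dist_sq
      (a k) y z
    simp only [f, comp_apply, Pi.add_apply]
    linarith
  have hsum := limsup_add_le (f := atTop) (bddBelow_range_dist_sq y).isBoundedUnder_of_range
    (bddAbove_range_dist_sq ha y).isBoundedUnder_of_range
    (bddBelow_range_dist_sq z).isBoundedUnder_of_range.isCoboundedUnder_le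
    (bddAbove_range_dist_sq ha z).isBoundedUnder_of_range
  rw [limsupDistSq, hapollonius, ← hf.map_limsup_of_continuousAt _ (by fun_prop)
    (isBoundedUnder_le_add (bddAbove_range_dist_sq ha y).isBoundedUnder_of_range
      (bddAbove_range_dist_sq ha z).isBoundedUnder_of_range)
    (isBoundedUnder_ge_add (bddBelow_range_dist_sq y).isBoundedUnder_of_range
      (bddBelow_range_dist_sq z).isBoundedUnder_of_range).isCoboundedUnder_le]
  simp only [f, limsupDistSq] at hsum ⊢
  linarith

theorem exists_forall_le_of_midpoint_add_le {E : Type*} [NormedAddCommGroup E] [NormedSpace ℝ E]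
    [CompleteSpace E] {φ : E → ℝ} (hφ : Continuous φ) (hbdd : BddBelow (range φ))
    (hmid : ∀ y z, φ (midpoint ℝ y z) + (dist y z / 2) ^ 2 ≤ (φ y + φ z) / 2) :
    ∃ c, ∀ y, φ c ≤ φ y := by
  set m := ⨅ y, φ y
  have hm : ∀ y, m ≤ φ y := ciInf_le hbdd
  have hseq : ∀ n : ℕ, ∃ y, φ y < m + 1 / (n + 1) := fun n =>
    exists_lt_of_ciInf_lt (lt_add_of_pos_right m Nat.one_div_pos_of_nat)
  choose y hy using hseq
  have hcauchy : CauchySeq y := by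
    refine Metric.cauchySeq_iff'.2 fun ε hε => ?_
    obtain ⟨N, hN⟩ := exists_nat_one_div_lt (by positivity : 0 < (ε / 2) ^ 2)
    refine ⟨N, fun n hn => ?_⟩
    have hnN : 1 / ((n : ℝ) + 1) ≤ 1 / (N + 1) := Nat.one_div_le_one_div hn
    have hsq : (dist (y n) (y N) / 2) ^ 2 < (ε / 2) ^ 2 := by
      linarith [hmid (y n) (y N), hm (midpoint ℝ (y n) (y N)), hy n, hy N]
    have hdist := (pow_lt_pow_iff_left₀ (by positivity) (by positivity) two_ne_zero).1 hsq
    linarith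
  obtain ⟨c, hc⟩ := cauchySeq_tendsto_of_complete hcauchy
  have hlim : Tendsto (fun n => φ (y n)) atTop (𝓝 m) := by
    refine tendsto_of_tendsto_of_tendsto_of_le_of_le tendsto_const_nhds ?_ (fun n => hm (y n))
      (fun n => (hy n).le)
    simpa using (tendsto_const_nhds (x := m)).add tendsto_one_div_add_atTop_nhds_zero_nat
  refine ⟨c, fun z => ?_⟩
  rw [tendsto_nhds_unique ((hφ.tendsto c).comp hc) hlim]
  exact hm z

theorem exists_isFixedPt_of_isBounded_orbit {E : Type*} [NormedAddCommGroup E]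
    [InnerProductSpace ℝ E] [CompleteSpace E] {T : E → E} (hT : LipschitzWith 1 T) {x : E}
    (hx : IsBounded (range fun k => T^[k] x)) : ∃ c, IsFixedPt T c := by
  obtain ⟨c, hc⟩ := exists_forall_le_of_midpoint_add_le (continuous_limsupDistSq hx)
    ⟨0, forall_mem_range.2 (limsupDistSq_nonneg hx)⟩ (limsupDistSq_midpoint_add_le hx)
  refine ⟨c, dist_le_zero.1 ?_⟩
  have hshift := limsupDistSq_orbit_apply_le hT hx c
  have hmid := limsupDistSq_midpoint_add_le hx (T c) c
  have hmin := hc (midpoint ℝ (T c) c)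
  nlinarith [dist_nonneg (x := T c) (y := c)]

theorem LipschitzWith.exists_isBounded_orbit_iff {E : Type*} [NormedAddCommGroup E]
    [InnerProductSpace ℝ E] [CompleteSpace E] {T : E → E} (hT : LipschitzWith 1 T) :
    (∃ x, IsBounded (range fun k => T^[k] x)) ↔ ∃ c, IsFixedPt T c :=
  ⟨fun ⟨_, hx⟩ => exists_isFixedPt_of_isBounded_orbit hT hx, fun ⟨c, hc⟩ =>
    ⟨c, isBounded_singleton.subset (range_subset_iff.2 fun k => hc.iterate k)⟩⟩

section Resolvent

variable {E : Type*} [NormedAddCommGroup E] [InnerProductSpace ℝ E]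

theorem norm_sub_le_norm_add_of_inner_nonneg {u v : E} (h : 0 ≤ ⟪u, v⟫) : ‖u - v‖ ≤ ‖u + v‖ := by
  refine (pow_le_pow_iff_left₀ (norm_nonneg _) (norm_nonneg _) two_ne_zero).1 ?_
  rw [norm_sub_sq_real, norm_add_sq_real]
  linarith

theorem MonotoneOp.pert {A : E → Set E} (hA : MonotoneOp A) (z : E) {β : ℝ} (hβ0 : 0 < β)
    (hβ1 : β ≤ 1) : MonotoneOp (pert A z β) := by
  rintro x y - - ⟨a, ha, rfl⟩ ⟨b, hb, rfl⟩
  have hxy : x - y = β • ((β⁻¹ • x + z) - (β⁻¹ • y + z)) := by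
    rw [add_sub_add_right_eq_sub, ← smul_sub, smul_smul, mul_inv_cancel₀ hβ0.ne', one_smul]
  have hab : 0 ≤ ⟪x - y, a - b⟫ := by
    rw [hxy, real_inner_smul_left]
    exact mul_nonneg hβ0.le (hA ha hb)
  have hsplit : (2 * (1 - β)) • a + ((1 - β) / β) • x - ((2 * (1 - β)) • b + ((1 - β) / β) • y) =
      (2 * (1 - β)) • (a - b) + ((1 - β) / β) • (x - y) := by module
  rw [hsplit, inner_add_right, real_inner_smul_right, real_inner_smul_right,
    real_inner_self_eq_norm_sq]
  have hβ : 0 ≤ 1 - β := by linarith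
  positivity

def IsResolvent (F : E → Set E) (r : ℝ) (J : E → E) : Prop :=
  ∀ w, ∃ m ∈ F (J w), w = J w + r • m

def reflectedResolvent (J : E → E) : E → E := fun w => (2 : ℝ) • J w - w

variable {F G : E → Set E} {r : ℝ} {J JF JG : E → E}

theorem IsResolvent.apply_add_smul (hJ : IsResolvent F r J) (hF : MonotoneOp F) (hr : 0 ≤ r)
    {p m : E} (hm : m ∈ F p) : J (p + r • m) = p := by
  obtain ⟨m₀, hm₀, h₀⟩ := hJ (p + r • m)
  have hdiff : J (p + r • m) - p = r • (m - m₀) := by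
    rw [smul_sub]; linear_combination (norm := module) -h₀
  have hinner : ‖J (p + r • m) - p‖ ^ 2 = -(r * ⟪J (p + r • m) - p, m₀ - m⟫) := by
    rw [← real_inner_self_eq_norm_sq]
    nth_rw 2 [hdiff]
    rw [real_inner_smul_right, ← neg_sub m₀ m, inner_neg_right, mul_neg]
  have hsq : ‖J (p + r • m) - p‖ ^ 2 ≤ 0 := hinner ▸ neg_nonpos.2 (mul_nonneg hr (hF hm₀ hm))
  exact sub_eq_zero.1 (norm_eq_zero.1 (pow_eq_zero_iff two_ne_zero |>.1
    (le_antisymm hsq (sq_nonneg _))))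

theorem IsResolvent.lipschitzWith_reflectedResolvent (hJ : IsResolvent F r J) (hF : MonotoneOp F)
    (hr : 0 ≤ r) : LipschitzWith 1 (reflectedResolvent J) := by
  refine LipschitzWith.of_dist_le_mul fun w w' => ?_
  obtain ⟨m, hm, hw⟩ := hJ w
  obtain ⟨m', hm', hw'⟩ := hJ w'
  have hinner : 0 ≤ ⟪J w - J w', r • (m - m')⟫ := by
    rw [real_inner_smul_right]; exact mul_nonneg hr (hF hm hm')
  have hR : reflectedResolvent J w - reflectedResolvent J w' = (J w - J w') - r • (m - m') := by
    simp only [reflectedResolvent]; linear_combination (norm := module) hw' - hw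
  have hI : w - w' = (J w - J w') + r • (m - m') := by
    linear_combination (norm := module) hw - hw'
  rw [NNReal.coe_one, one_mul, dist_eq_norm, dist_eq_norm, hR, hI]
  exact norm_sub_le_norm_add_of_inner_nonneg hinner

theorem IsResolvent.exists_mem_neg_mem_of_isFixedPt (hJF : IsResolvent F r JF)
    (hJG : IsResolvent G r JG) (hr : r ≠ 0) {c : E}
    (hc : IsFixedPt (reflectedResolvent JG ∘ reflectedResolvent JF) c) :
    ∃ p, ∃ m ∈ F p, -m ∈ G p := by
  obtain ⟨m, hm, hcm⟩ := hJF c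
  obtain ⟨m', hm', hwm'⟩ := hJG (reflectedResolvent JF c)
  have hfix : (2 : ℝ) • JG (reflectedResolvent JF c) - reflectedResolvent JF c = c := hc
  have hJGw : JG (reflectedResolvent JF c) = JF c := by
    refine smul_right_injective E (two_ne_zero (α := ℝ)) ?_
    simp only [reflectedResolvent] at hfix ⊢
    linear_combination (norm := module) hfix
  rw [hJGw] at hm' hwm'
  have hm'm : m' = -m := by
    refine smul_right_injective E hr ?_
    simp only [reflectedResolvent] at hwm'
    linear_combination (norm := module) -hwm' - hcm
  exact ⟨JF c, m, hm, hm'm ▸ hm'⟩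

theorem IsResolvent.isFixedPt_of_mem_neg_mem (hJF : IsResolvent F r JF)
    (hJG : IsResolvent G r JG) (hF : MonotoneOp F) (hG : MonotoneOp G) (hr : 0 ≤ r) {p m : E}
    (hm : m ∈ F p) (hm' : -m ∈ G p) :
    IsFixedPt (reflectedResolvent JG ∘ reflectedResolvent JF) (p + r • m) := by
  have hF' : reflectedResolvent JF (p + r • m) = p + r • -m := by
    rw [reflectedResolvent, hJF.apply_add_smul hF hr hm]; module
  rw [IsFixedPt, comp_apply, hF', reflectedResolvent, hJG.apply_add_smul hG hr hm']
  module

theorem exists_isFixedPt_reflectedResolvent_comp_iff (hF : MonotoneOp F) (hG : MonotoneOp G)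
    (hJF : IsResolvent F r JF) (hJG : IsResolvent G r JG) (hr : 0 < r) :
    (∃ c, IsFixedPt (reflectedResolvent JG ∘ reflectedResolvent JF) c) ↔
      ∃ p, ∃ m ∈ F p, -m ∈ G p :=
  ⟨fun ⟨_, hc⟩ => hJF.exists_mem_neg_mem_of_isFixedPt hJG hr.ne' hc,
    fun ⟨_, _, hm, hm'⟩ => ⟨_, hJF.isFixedPt_of_mem_neg_mem hJG hF hG hr.le hm hm'⟩⟩

theorem exists_mem_pert_neg_mem_pert_iff {A B : E → Set E} {z : E} {β : ℝ} (hβ0 : β ≠ 0)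
    (hβ1 : β ≠ 1) :
    (∃ p, ∃ m ∈ pert A z β p, -m ∈ pert B z β p) ↔
      {u | ∃ a ∈ A u, ∃ b ∈ B u, z = u + a + b}.Nonempty := by
  have hβ1' : 2 * (1 - β) ≠ 0 := mul_ne_zero two_ne_zero (sub_ne_zero.2 hβ1.symm)
  have hsum : ∀ (a b p : E), (2 * (1 - β)) • a + ((1 - β) / β) • p +
      ((2 * (1 - β)) • b + ((1 - β) / β) • p) = (2 * (1 - β)) • (a + b + β⁻¹ • p) := by
    intros; module
  constructor
  · rintro ⟨p, -, ⟨a, ha, rfl⟩, ⟨b, hb, hab⟩⟩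
    refine ⟨β⁻¹ • p + z, a, ha, b, hb, ?_⟩
    have hzero : a + b + β⁻¹ • p = 0 := by
      refine (smul_eq_zero.1 ?_).resolve_left hβ1'
      beta_reduce at hab
      rw [← hsum, hab, add_neg_cancel]
    linear_combination (norm := module) -hzero
  · rintro ⟨u, a, ha, b, hb, hz⟩
    have hu : β⁻¹ • (β • (u - z)) + z = u := by
      rw [smul_smul, inv_mul_cancel₀ hβ0, one_smul, sub_add_cancel]
    refine ⟨β • (u - z), _, ⟨a, by rwa [hu], rfl⟩, b, by rwa [hu], ?_⟩
    rw [eq_neg_iff_add_eq_zero, add_comm, hsum, smul_smul, inv_mul_cancel₀ hβ0, one_smul, hz]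
    module

end Resolvent

theorem stmt7 (A B : H → Set H) (hA : MaximalMonotoneOp A) (hB : MaximalMonotoneOp B)
    (z : H) (β r : ℝ) (hβ : β ∈ Set.Ioo (0:ℝ) 1) (hr : 0 < r) (JA JB : H → H)
    (hJA : ∀ w : H, ∃ m ∈ pert A z β (JA w), w = JA w + r • m)
    (hJB : ∀ w : H, ∃ m ∈ pert B z β (JB w), w = JB w + r • m)
    (T : H → H) (hT : ∀ x, T x = (2:ℝ) • JB ((2:ℝ) • JA x - x) - ((2:ℝ) • JA x - x)) :
    (∃ x : H, Bornology.IsBounded (Set.range fun k : ℕ => T^[k] x)) ↔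
      {u : H | ∃ a ∈ A u, ∃ b ∈ B u, z = u + a + b}.Nonempty := by
  obtain ⟨hβ0, hβ1⟩ := hβ
  have hA' := hA.1.pert z hβ0 hβ1.le
  have hB' := hB.1.pert z hβ0 hβ1.le
  have hT' : T = reflectedResolvent JB ∘ reflectedResolvent JA := funext hT
  have hTlip : LipschitzWith 1 T := by
    simpa only [hT', mul_one] using
      (IsResolvent.lipschitzWith_reflectedResolvent hJB hB' hr.le).comp
        (IsResolvent.lipschitzWith_reflectedResolvent hJA hA' hr.le)
  rw [hTlip.exists_isBounded_orbit_iff, hT',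
    exists_isFixedPt_reflectedResolvent_comp_iff hA' hB' hJA hJB hr]
  exact exists_mem_pert_neg_mem_pert_iff hβ0.ne' hβ1.ne
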